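/- Let q, a ∈ ℂ with q ≠ 0, qⁿ ≠ 1 for nonzero n, and a q^k ≠ 1 as needed. Then for each n ≥ 0, lim_{a→0} (−1)ⁿ q^{n(n−1)/2} (aq; q)_n p_n(x; a; q) = xⁿ (x^{−1}; q)_n, where p_n(x; a; q) = ₂φ₁(q^{−n}, 0; qa; q, qx) is the little q-Laguerre polynomial. -/

import Mathlib

/-!
The denominators `(q;q)_k (qa;q)_k` do not vanish near `a = 0`, so the limit is the value at
`a = 0`, where the little q-Laguerre sum becomes the terminating q-binomial series
`₁φ₀(q⁻ⁿ; —; q, qx)`. The q-binomial theorem sums it to `(q^{1-n} x; q)_n`, by induction on `n`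
through the Pascal-type relation `(b;q)_{k+1} = (bq;q)_{k+1} - b (1 - q^{k+1}) (bq;q)_k`.
Reversing the order of the factors turns `(-1)ⁿ q^{n(n-1)/2} (q^{1-n} x; q)_n` into
`∏_{j<n} (x - q^j)`.
-/

open Finset Filter

noncomputable def qPoch (a q : ℂ) (k : ℕ) : ℂ := ∏ i ∈ range k, (1 - a * q ^ i)

noncomputable def littleqLaguerre (q a : ℂ) (n : ℕ) (x : ℂ) : ℂ :=
  ∑ k ∈ range (n + 1),
    qPoch (q ^ (-(n : ℤ))) q k / (qPoch q q k * qPoch (q * a) q k) * (q * x) ^ k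

section qPoch

variable (a q : ℂ) (k : ℕ)

@[simp]
lemma qPoch_zero_right : qPoch a q 0 = 1 := prod_range_zero _

@[simp]
lemma qPoch_zero_left : qPoch 0 q k = 1 := by simp [qPoch]

lemma qPoch_succ : qPoch a q (k + 1) = qPoch a q k * (1 - a * q ^ k) :=
  prod_range_succ _ _

lemma qPoch_succ' : qPoch a q (k + 1) = (1 - a) * qPoch (a * q) q k := by
  simp only [qPoch, prod_range_succ', pow_succ', pow_zero, mul_one, mul_assoc]
  ring

lemma qPoch_succ_eq_sub : qPoch a q (k + 1)
    = qPoch (a * q) q (k + 1) - a * (1 - q ^ (k + 1)) * qPoch (a * q) q k := by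
  rw [qPoch_succ', qPoch_succ]
  ring

lemma continuous_qPoch : Continuous fun a ↦ qPoch a q k := by
  unfold qPoch
  fun_prop

variable {a q k}

lemma qPoch_ne_zero (h : ∀ i < k, a * q ^ i ≠ 1) : qPoch a q k ≠ 0 :=
  prod_ne_zero_iff.2 fun i hi ↦ sub_ne_zero.2 (h i (mem_range.1 hi)).symm

lemma qPoch_self_ne_zero (h : ∀ i < k, q ^ (i + 1) ≠ 1) : qPoch q q k ≠ 0 :=
  qPoch_ne_zero fun i hi ↦ by rw [← pow_succ']; exact h i hi

lemma qPoch_zpow_neg_eq_zero (hq : q ≠ 0) {n : ℕ} (hnk : n < k) :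
    qPoch (q ^ (-(n : ℤ))) q k = 0 :=
  prod_eq_zero (mem_range.2 hnk) <| by
    rw [zpow_neg, zpow_natCast, inv_mul_cancel₀ (pow_ne_zero n hq), sub_self]

end qPoch

/-- The `N`-th partial sum of the q-binomial series `₁φ₀(a; —; q, z)`. -/
noncomputable def qBinomialSum (a q z : ℂ) (N : ℕ) : ℂ :=
  ∑ k ∈ range N, qPoch a q k / qPoch q q k * z ^ k

lemma qBinomialSum_succ (a z : ℂ) {q : ℂ} {N : ℕ} (hq1 : ∀ i < N, q ^ (i + 1) ≠ 1) :
    qBinomialSum a q z (N + 1)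
      = qBinomialSum (a * q) q z (N + 1) - a * z * qBinomialSum (a * q) q z N := by
  have hterm : ∀ k ∈ range N, qPoch a q (k + 1) / qPoch q q (k + 1) * z ^ (k + 1)
      = qPoch (a * q) q (k + 1) / qPoch q q (k + 1) * z ^ (k + 1)
        - a * z * (qPoch (a * q) q k / qPoch q q k * z ^ k) := by
    intro k hk
    have hk := mem_range.1 hk
    have hQ : qPoch q q k ≠ 0 := qPoch_self_ne_zero fun i hi ↦ hq1 i (hi.trans hk)
    have hq' : 1 - q ^ (k + 1) ≠ 0 := sub_ne_zero.2 (hq1 k hk).symm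
    rw [qPoch_succ_eq_sub, qPoch_succ q q k, ← pow_succ']
    field_simp
    ring
  simp only [qBinomialSum, sum_range_succ' _ N, sum_congr rfl hterm, sum_sub_distrib, mul_sum,
    qPoch_zero_right]
  ring

theorem qBinomialSum_zpow_neg (z : ℂ) {q : ℂ} (hq : q ≠ 0) {n : ℕ}
    (hq1 : ∀ i < n, q ^ (i + 1) ≠ 1) :
    qBinomialSum (q ^ (-(n : ℤ))) q z (n + 1) = qPoch (z * q ^ (-(n : ℤ))) q n := by
  induction n with
  | zero => simp [qBinomialSum]
  | succ n ih =>
    set b := q ^ (-((n + 1 : ℕ) : ℤ))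
    have hb : b * q = q ^ (-(n : ℤ)) := by
      rw [← zpow_add_one₀ hq]
      push_cast
      ring_nf
    have hlast : qBinomialSum (q ^ (-(n : ℤ))) q z (n + 1 + 1)
        = qBinomialSum (q ^ (-(n : ℤ))) q z (n + 1) := by
      rw [qBinomialSum, sum_range_succ, qPoch_zpow_neg_eq_zero hq (Nat.lt_succ_self n), zero_div,
        zero_mul, add_zero, qBinomialSum]
    rw [qBinomialSum_succ _ _ hq1, hb, hlast, ih fun i hi ↦ hq1 i (hi.trans (Nat.lt_succ_self n)),
      qPoch_succ', mul_assoc z b q, hb]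
    ring

theorem prod_sub_pow_eq_qPoch {q : ℂ} (hq : q ≠ 0) (x : ℂ) (n : ℕ) :
    ∏ j ∈ range n, (x - q ^ j)
      = (-1) ^ n * q ^ (n * (n - 1) / 2) * qPoch (q * x * q ^ (-(n : ℤ))) q n := by
  have hfactor : ∀ j ∈ range n,
      x - q ^ j = -q ^ j * (1 - q * x * q ^ (-(n : ℤ)) * q ^ (n - 1 - j)) := by
    intro j hj
    have hpow : q ^ j * q * q ^ (n - 1 - j) = q ^ n := by
      rw [← pow_succ, ← pow_add]
      congr 1
      have := mem_range.1 hj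
      omega
    rw [zpow_neg, zpow_natCast]
    field_simp
    linear_combination (-x) * hpow
  have hsigns : ∏ j ∈ range n, -q ^ j = (-1) ^ n * q ^ (n * (n - 1) / 2) := by
    rw [prod_neg, card_range, prod_pow_eq_pow_sum, sum_range_id]
  rw [prod_congr rfl hfactor, prod_mul_distrib, hsigns, qPoch,
    ← prod_range_reflect (fun i ↦ 1 - q * x * q ^ (-(n : ℤ)) * q ^ i) n]

lemma continuousAt_littleqLaguerre {q a₀ : ℂ} {n : ℕ} (x : ℂ)
    (h : ∀ k ∈ range (n + 1), qPoch q q k * qPoch (q * a₀) q k ≠ 0) :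
    ContinuousAt (fun a ↦ littleqLaguerre q a n x) a₀ := by
  refine tendsto_finsetSum _ fun k hk ↦ ?_
  have hden : Continuous fun a ↦ qPoch q q k * qPoch (q * a) q k :=
    continuous_const.mul ((continuous_qPoch q k).comp (continuous_const.mul continuous_id))
  exact (continuousAt_const.div hden.continuousAt (h k hk)).mul continuousAt_const

lemma littleqLaguerre_zero (q : ℂ) (n : ℕ) (x : ℂ) :
    littleqLaguerre q 0 n x = qBinomialSum (q ^ (-(n : ℤ))) q (q * x) (n + 1) := by
  simp [littleqLaguerre, qBinomialSum]

theorem littleqLaguerre_limit (q : ℂ)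
    (hq : q ≠ 0) (hq1 : ∀ n : ℤ, n ≠ 0 → q ^ n ≠ 1)
    (n : ℕ) (x : ℂ) :
    Tendsto (fun a : ℂ =>
        (-1) ^ n * q ^ (n * (n - 1) / 2) * qPoch (a * q) q n * littleqLaguerre q a n x)
      (nhdsWithin 0 {0}ᶜ) (nhds (∏ j ∈ range n, (x - q ^ j))) := by
  have hq_pow : ∀ i : ℕ, q ^ (i + 1) ≠ 1 := fun i ↦ by
    exact_mod_cast hq1 (i + 1) (by omega)
  have hpoch : Continuous fun a : ℂ ↦ qPoch (a * q) q n :=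
    (continuous_qPoch q n).comp (continuous_id.mul continuous_const)
  have hcont : ContinuousAt (fun a : ℂ ↦
      (-1) ^ n * q ^ (n * (n - 1) / 2) * qPoch (a * q) q n * littleqLaguerre q a n x) 0 :=
    (continuousAt_const.mul hpoch.continuousAt).mul <| continuousAt_littleqLaguerre x fun k _ ↦ by
      simpa using qPoch_self_ne_zero fun i _ ↦ hq_pow i
  have hvalue : (-1) ^ n * q ^ (n * (n - 1) / 2) * qPoch (0 * q) q n * littleqLaguerre q 0 n x
      = ∏ j ∈ range n, (x - q ^ j) := by
    rw [zero_mul, qPoch_zero_left, mul_one, littleqLaguerre_zero,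
      qBinomialSum_zpow_neg _ hq fun i _ ↦ hq_pow i, prod_sub_pow_eq_qPoch hq]
  exact (hvalue ▸ hcont.tendsto).mono_left nhdsWithin_le_nhds
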